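/- Let d ≥ 2 be an integer and β > 0. Define ψ(y) = 2(d − 2) e^{β(1+y)} / (e^{2β} + e^{2βy}) and the scale density s(x) = (1 − x²)^{−1/2} · exp( − ∫_0^x ψ(y)/(1 − y²) dy ) for x ∈ (−1, 1). Then the improper integral ∫_0^1 s(x) dx is finite for every integer d ≥ 2 and every β > 0. -/

import Mathlib

open Real

/-- `ψ(y) = 2(d−2)e^{β(1+y)} / (e^{2β} + e^{2βy})`. -/
noncomputable def psi (d : ℕ) (β y : ℝ) : ℝ :=
  2 * ((d : ℝ) - 2) * exp (β * (1 + y)) / (exp (2 * β) + exp (2 * β * y))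

/-- Scale density `s(x) = (1 − x²)^{−1/2} exp(−∫₀ˣ ψ(y)/(1 − y²) dy)` of the
two-token overlap diffusion. -/
noncomputable def scaleDensity (d : ℕ) (β x : ℝ) : ℝ :=
  (1 - x ^ 2) ^ (-(1 / 2 : ℝ)) * exp (-∫ y in (0 : ℝ)..x, psi d β y / (1 - y ^ 2))

lemma psi_nonneg (d : ℕ) (hd : 2 ≤ d) (β y : ℝ) : 0 ≤ psi d β y := by
  unfold psi
  have h2 : (2 : ℝ) ≤ (d : ℝ) := by exact_mod_cast hd
  have hnum : 0 ≤ 2 * ((d : ℝ) - 2) := by linarith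
  exact div_nonneg (mul_nonneg hnum (exp_pos _).le) (by positivity)

lemma psi_continuous (d : ℕ) (β : ℝ) : Continuous (psi d β) := by
  unfold psi
  refine Continuous.div (by continuity) (by continuity) ?_
  intro y
  positivity

/-- The improper integral `∫₀¹ s(x) dx` is finite for every `d ≥ 2` and `β > 0`:
the single-cluster boundary `+1` is always attracting. -/
theorem scale_function_finite_at_one (d : ℕ) (hd : 2 ≤ d) (β : ℝ) (hβ : 0 < β) :
    MeasureTheory.IntegrableOn (scaleDensity d β) (Set.Ioo (0 : ℝ) 1) := by
  set g : ℝ → ℝ := fun y => psi d β y / (1 - y ^ 2) with hg_def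
  -- continuity of the integrand on (-1, 1)
  have hg_cont : ContinuousOn g (Set.Ioo (-1 : ℝ) 1) := by
    apply ContinuousOn.div (psi_continuous d β).continuousOn (by fun_prop)
    intro y hy
    have h1 : y ^ 2 < 1 := by
      rw [sq_lt_one_iff_abs_lt_one, abs_lt]; exact ⟨hy.1, hy.2⟩
    linarith
  -- continuity of the primitive on (0,1)
  have hF_cont : ContinuousOn (fun x => ∫ y in (0 : ℝ)..x, g y) (Set.Ioo (0 : ℝ) 1) := by
    intro x hx
    obtain ⟨b, hxb, hb1⟩ := exists_between hx.2
    have hsub : Set.Icc (0 : ℝ) b ⊆ Set.Ioo (-1 : ℝ) 1 := fun y hy =>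
      ⟨by linarith [hy.1], by linarith [hy.2]⟩
    have hint : MeasureTheory.IntegrableOn g (Set.Icc (0 : ℝ) b) :=
      (hg_cont.mono hsub).integrableOn_Icc
    have huIcc : Set.uIcc (0 : ℝ) b = Set.Icc 0 b :=
      Set.uIcc_of_le (by linarith [hx.1])
    have hcont := intervalIntegral.continuousOn_primitive_interval (a := (0 : ℝ)) (b := b)
      (μ := MeasureTheory.volume) (f := g) (by rwa [huIcc])
    rw [huIcc] at hcont
    have hmem : Set.Icc (0 : ℝ) b ∈ nhds x :=
      Icc_mem_nhds hx.1 hxb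
    exact ((hcont.continuousAt hmem).continuousWithinAt)
  have hmeas : MeasureTheory.AEStronglyMeasurable (scaleDensity d β)
      (MeasureTheory.volume.restrict (Set.Ioo (0 : ℝ) 1)) := by
    have : ContinuousOn (scaleDensity d β) (Set.Ioo (0 : ℝ) 1) := by
      unfold scaleDensity
      exact ((continuousOn_const.sub (continuousOn_pow 2)).rpow_const
        (fun x hx => Or.inl (by show (1 : ℝ) - x ^ 2 ≠ 0; nlinarith [hx.1, hx.2]))).mul
        ((continuous_exp.comp_continuousOn hF_cont.neg))
    exact this.aestronglyMeasurable measurableSet_Ioo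
  -- the dominating function
  have hbound_int : MeasureTheory.IntegrableOn (fun x => (1 - x) ^ (-(1 / 2 : ℝ)))
      (Set.Ioo (0 : ℝ) 1) := by
    have h1 : IntervalIntegrable (fun x : ℝ => x ^ (-(1 / 2 : ℝ))) MeasureTheory.volume 1 0 :=
      intervalIntegral.intervalIntegrable_rpow' (by norm_num)
    have h2 := h1.comp_sub_left 1
    simp only [sub_self, sub_zero] at h2
    rw [intervalIntegrable_iff_integrableOn_Ioo_of_le (by norm_num)] at h2
    exact h2
  refine hbound_int.mono' hmeas ?_
  filter_upwards [MeasureTheory.ae_restrict_mem measurableSet_Ioo] with x hx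
  have hx0 : 0 < x := hx.1
  have hx1 : x < 1 := hx.2
  have h1x2 : 0 < 1 - x ^ 2 := by nlinarith
  -- the exponential factor is at most 1
  have hI : 0 ≤ ∫ y in (0 : ℝ)..x, g y := by
    apply intervalIntegral.integral_nonneg hx0.le
    intro y hy
    have h1 : 0 < 1 - y ^ 2 := by nlinarith [hy.1, hy.2]
    exact div_nonneg (psi_nonneg d hd β y) h1.le
  have hexp : exp (-∫ y in (0 : ℝ)..x, g y) ≤ 1 := by
    rw [exp_le_one_iff]; linarith
  have hpos : 0 ≤ scaleDensity d β x := by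
    unfold scaleDensity
    positivity
  rw [Real.norm_of_nonneg hpos]
  unfold scaleDensity
  calc (1 - x ^ 2) ^ (-(1 / 2 : ℝ)) * exp (-∫ y in (0 : ℝ)..x, g y)
      ≤ (1 - x ^ 2) ^ (-(1 / 2 : ℝ)) * 1 := by
        apply mul_le_mul_of_nonneg_left hexp (by positivity)
    _ = (1 - x ^ 2) ^ (-(1 / 2 : ℝ)) := mul_one _
    _ ≤ (1 - x) ^ (-(1 / 2 : ℝ)) := by
        apply Real.rpow_le_rpow_of_nonpos (by linarith) (by nlinarith) (by norm_num)
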